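/- Let α and β be irrational numbers with 1 < α < 2 and 1/α + 1/β = 1, and set a_n = ⌊nα⌋ and b_n = ⌊nβ⌋ for n ≥ 1, A = {⌊mα⌋ : m ≥ 1}, B = {⌊mβ⌋ : m ≥ 1}. Then for every positive integer n, b_n − a_n = ⌊((2 − α)/(α − 1))·n⌋ + ⌊(2 − α)n⌋ + 1, where the first summand equals the number of integers m ∈ A with a_n < m < b_n and the second equals the number of integers m ∈ B with a_n < m < b_n. -/

import Mathlib

/-!
With `β = α / (α - 1)` we get `(2 - α) / (α - 1) = β - 2`, so the first floor is `⌊nβ⌋ - 2n`, and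
since `nα` is irrational the second one is `2n - ⌊nα⌋ - 1`; they add up to `⌊nβ⌋ - ⌊nα⌋ - 1`.
Everything else rests on the identity `(x - y) α - x = (α - 1) (x - y β)`: taking `x = ⌊nβ⌋`
and `x = ⌊nβ⌋ + 1`, `y = n` shows that `kα < ⌊nβ⌋` iff `k ≤ ⌊nβ⌋ - n` and that no `kα` lies in
`[⌊nβ⌋, ⌊nβ⌋ + 1)`. Hence the values `⌊kα⌋` strictly between `⌊nα⌋` and `⌊nβ⌋` are those with
`n < k ≤ ⌊nβ⌋ - n`, and (swapping the roles of `α` and `β`) the values `⌊kβ⌋` are those with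
`⌊nα⌋ - n < k < n`.
-/

lemma strictMono_floor_natCast_mul {γ : ℝ} (hγ : 1 ≤ γ) :
    StrictMono fun k : ℕ => ⌊(k : ℝ) * γ⌋ :=
  strictMono_nat_of_lt_succ fun k =>
    calc ⌊(k : ℝ) * γ⌋ < ⌊(k : ℝ) * γ⌋ + 1 := lt_add_one _
      _ = ⌊(k : ℝ) * γ + 1⌋ := (Int.floor_add_one _).symm
      _ ≤ ⌊((k + 1 : ℕ) : ℝ) * γ⌋ := Int.floor_le_floor (by push_cast; linarith)

lemma Irrational.floor_lt_and_lt_floor_add_one {x : ℝ} (hx : Irrational x) :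
    (⌊x⌋ : ℝ) < x ∧ x < ⌊x⌋ + 1 :=
  ⟨(Int.floor_le x).lt_of_ne (hx.ne_int _).symm, Int.lt_floor_add_one x⟩

lemma ncard_pos_image_inter_Ioo {f : ℕ → ℤ} (hf : Function.Injective f) {lo hi : ℤ} {p q : ℕ}
    (hlo : ∀ k, lo < f k ↔ p < k) (hhi : ∀ k, f k < hi ↔ k ≤ q) :
    {m : ℤ | (∃ k : ℕ, 0 < k ∧ m = f k) ∧ lo < m ∧ m < hi}.ncard = q - p := by
  have hset : {m : ℤ | (∃ k : ℕ, 0 < k ∧ m = f k) ∧ lo < m ∧ m < hi} =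
      ((Finset.Ioc p q).image f : Set ℤ) := by
    ext m
    simp only [Set.mem_ofPred_eq, Finset.coe_image, Finset.coe_Ioc, Set.mem_image, Set.mem_Ioc]
    constructor
    · rintro ⟨⟨k, -, rfl⟩, hk_lo, hk_hi⟩
      exact ⟨k, ⟨(hlo k).1 hk_lo, (hhi k).1 hk_hi⟩, rfl⟩
    · rintro ⟨k, ⟨hpk, hkq⟩, rfl⟩
      exact ⟨⟨k, by omega, rfl⟩, (hlo k).2 hpk, (hhi k).2 hkq⟩
  rw [hset, Set.ncard_coe_finset, Finset.card_image_of_injective _ hf, Nat.card_Ioc]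

namespace Real.HolderConjugate

variable {α β : ℝ}

lemma two_sub_div_sub_one (h : α.HolderConjugate β) : (2 - α) / (α - 1) = β - 2 := by
  rw [h.conjugate_eq]
  field_simp [h.sub_one_ne_zero]
  ring

lemma sub_mul_lt_iff_lt_mul (h : α.HolderConjugate β) {x y : ℝ} :
    (x - y) * α < x ↔ x < y * β := by
  have key : (x - y) * α - x = (α - 1) * (x - y * β) := by
    linear_combination y * h.sub_one_mul_conj
  rw [← sub_neg, key, ← mul_zero (α - 1), mul_lt_mul_iff_right₀ h.sub_one_pos, sub_neg]

/-- The multiples of `α` avoid `[m, m + 1)` for `m = ⌊nβ⌋`: Beatty complementarity. -/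
lemma intCast_mul_lt_iff (h : α.HolderConjugate β) {m n : ℤ} (hm : m < n * β)
    (hm1 : n * β < m + 1) {x : ℝ} (hmx : m ≤ x) (hxm : x ≤ m + 1) (k : ℤ) :
    (k : ℝ) * α < x ↔ k ≤ m - n := by
  constructor
  · intro hk
    by_contra! hk'
    have : ((m + 1 - n : ℤ) : ℝ) * α ≤ k * α := by gcongr; exacts [h.pos.le, by omega]
    have := (h.sub_mul_lt_iff_lt_mul (x := m + 1) (y := n)).not.2 hm1.not_gt
    push_cast at *
    linarith
  · intro hk
    have : (k : ℝ) * α ≤ ((m - n : ℤ) : ℝ) * α := by gcongr; exact h.pos.le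
    have := (h.sub_mul_lt_iff_lt_mul (x := m) (y := n)).2 hm
    push_cast at *
    linarith

lemma ncard_floor_mul_mem_Ioo_floor_mul_conj (h : α.HolderConjugate β) {n : ℕ}
    (hn : Irrational ((n : ℝ) * β)) :
    ({m : ℤ | (∃ k : ℕ, 0 < k ∧ m = ⌊(k : ℝ) * α⌋) ∧
        ⌊(n : ℝ) * α⌋ < m ∧ m < ⌊(n : ℝ) * β⌋}.ncard : ℤ) = (⌊(n : ℝ) * β⌋ - 2 * n).toNat := by
  obtain ⟨hb, hb1⟩ := hn.floor_lt_and_lt_floor_add_one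
  set b := ⌊(n : ℝ) * β⌋
  have hnb : (n : ℤ) ≤ b := Int.le_floor.2 (by push_cast; nlinarith [h.symm.lt])
  have hmono := strictMono_floor_natCast_mul h.lt.le
  have hhi (k : ℕ) : ⌊(k : ℝ) * α⌋ < b ↔ k ≤ (b - n).toNat := by
    have := h.intCast_mul_lt_iff (m := b) (n := n) (by exact_mod_cast hb) (by exact_mod_cast hb1)
      le_rfl (by linarith) k
    push_cast at this
    rw [Int.floor_lt, this]
    omega
  rw [ncard_pos_image_inter_Ioo hmono.injective (fun _ => hmono.lt_iff_lt) hhi]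
  omega

lemma ncard_floor_mul_mem_Ioo_floor_conj_mul (h : α.HolderConjugate β) {n : ℕ}
    (hn : Irrational ((n : ℝ) * β)) :
    ({m : ℤ | (∃ k : ℕ, 0 < k ∧ m = ⌊(k : ℝ) * α⌋) ∧
        ⌊(n : ℝ) * β⌋ < m ∧ m < ⌊(n : ℝ) * α⌋}.ncard : ℤ) = (2 * n - ⌊(n : ℝ) * β⌋ - 1).toNat := by
  obtain ⟨hb, hb1⟩ := hn.floor_lt_and_lt_floor_add_one
  set b := ⌊(n : ℝ) * β⌋
  have hnb : (n : ℤ) ≤ b := Int.le_floor.2 (by push_cast; nlinarith [h.symm.lt])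
  have hn0 : n ≠ 0 := by rintro rfl; simp at hn
  have hmono := strictMono_floor_natCast_mul h.lt.le
  have hlo (k : ℕ) : b < ⌊(k : ℝ) * α⌋ ↔ (b - n).toNat < k := by
    have := h.intCast_mul_lt_iff (m := b) (n := n) (by exact_mod_cast hb) (by exact_mod_cast hb1)
      (by linarith) le_rfl k
    push_cast at this
    rw [Int.lt_iff_add_one_le, Int.le_floor, ← not_lt, Int.cast_add, Int.cast_one, this]
    omega
  have hhi (k : ℕ) : ⌊(k : ℝ) * α⌋ < ⌊(n : ℝ) * α⌋ ↔ k ≤ n - 1 := by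
    rw [hmono.lt_iff_lt]
    omega
  rw [ncard_pos_image_inter_Ioo hmono.injective hlo hhi]
  omega

end Real.HolderConjugate

theorem partial_decomposition_beatty
    (α β : ℝ) (hαirr : Irrational α) (hβirr : Irrational β)
    (hα1 : 1 < α) (hα2 : α < 2) (hsum : 1 / α + 1 / β = 1) :
    ∀ n : ℕ, 0 < n →
      ⌊(n : ℝ) * β⌋ - ⌊(n : ℝ) * α⌋ =
        ⌊((2 - α) / (α - 1)) * (n : ℝ)⌋ + ⌊(2 - α) * (n : ℝ)⌋ + 1 ∧
      ⌊((2 - α) / (α - 1)) * (n : ℝ)⌋ =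
        ({m : ℤ | (∃ k : ℕ, 0 < k ∧ m = ⌊(k : ℝ) * α⌋) ∧
            ⌊(n : ℝ) * α⌋ < m ∧ m < ⌊(n : ℝ) * β⌋}.ncard : ℤ) ∧
      ⌊(2 - α) * (n : ℝ)⌋ =
        ({m : ℤ | (∃ k : ℕ, 0 < k ∧ m = ⌊(k : ℝ) * β⌋) ∧
            ⌊(n : ℝ) * α⌋ < m ∧ m < ⌊(n : ℝ) * β⌋}.ncard : ℤ) := by
  intro n hn
  have h : α.HolderConjugate β :=
    Real.holderConjugate_iff.2 ⟨hα1, by simpa only [one_div] using hsum⟩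
  have hnα : Irrational ((n : ℝ) * α) := hαirr.natCast_mul hn.ne'
  have hnβ : Irrational ((n : ℝ) * β) := hβirr.natCast_mul hn.ne'
  have hfloor_conj : ⌊(2 - α) / (α - 1) * n⌋ = ⌊(n : ℝ) * β⌋ - 2 * n := by
    rw [h.two_sub_div_sub_one, sub_mul, mul_comm, ← Int.cast_natCast, ← Int.cast_ofNat,
      ← Int.cast_mul, Int.floor_sub_intCast]
  have hfloor_self : ⌊(2 - α) * n⌋ = 2 * n - ⌊(n : ℝ) * α⌋ - 1 := by
    obtain ⟨ha, ha1⟩ := hnα.floor_lt_and_lt_floor_add_one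
    rw [Int.floor_eq_iff]
    push_cast
    constructor <;> linarith
  have hconj_nonneg : 0 ≤ ⌊(2 - α) / (α - 1) * n⌋ :=
    Int.floor_nonneg.2 (mul_nonneg (div_nonneg (by linarith) (by linarith)) n.cast_nonneg)
  have hself_nonneg : 0 ≤ ⌊(2 - α) * n⌋ :=
    Int.floor_nonneg.2 (mul_nonneg (by linarith) n.cast_nonneg)
  refine ⟨by rw [hfloor_conj, hfloor_self]; ring, ?_, ?_⟩
  · rw [h.ncard_floor_mul_mem_Ioo_floor_mul_conj hnβ, ← hfloor_conj,
      Int.toNat_of_nonneg hconj_nonneg]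
  · rw [h.symm.ncard_floor_mul_mem_Ioo_floor_conj_mul hnα, ← hfloor_self,
      Int.toNat_of_nonneg hself_nonneg]
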